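/- Suppose F : ℝ → ℝ is continuously differentiable, p is a strict local minimum of F with F'(p) = 0, and F' < 0 on (a, p), F' > 0 on (p, b). Then for any initial point x₀ ∈ (a, b), the gradient flow x'(t) = -F'(x(t)) with x(0) = x₀ converges to p as t → ∞. -/

import Mathlib

/-! Started at `x₀ ≥ p`, the flow can never drop below `p`: just after the last time `T` at which
it is `≥ p` it would lie in `(a, p)`, where it is nondecreasing. For the same reason it never rises
above `x₀`, so it is nonincreasing in `[p, x₀]` and has a limit `L`. By the mean value theorem,
`x(t + 1) - x(t) = -F'(x(ξₜ))` with `ξₜ → ∞`, so `F'(L) = 0`, and `p` is the only zero of `F'` in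
`[p, b)`. The case `x₀ < p` is the mirror image under `x ↦ -x`. -/

open Set Filter Topology

lemma le_of_hasDerivAt_of_nonneg_below {x x' : ℝ → ℝ} {a p : ℝ} (hap : a < p)
    (hx : ∀ t, 0 ≤ t → HasDerivAt x (x' t) t) (h0 : p ≤ x 0)
    (hbelow : ∀ t, 0 ≤ t → x t ∈ Ioo a p → 0 ≤ x' t) (s : ℝ) (hs : 0 ≤ s) : p ≤ x s := by
  by_contra! hxs
  have hcont : ContinuousOn x (Icc 0 s) := fun t ht => (hx t ht.1).continuousAt.continuousWithinAt
  set K := Icc 0 s ∩ x ⁻¹' Ici p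
  have hK : IsCompact K :=
    isCompact_Icc.of_isClosed_subset (hcont.preimage_isClosed_of_isClosed isClosed_Icc isClosed_Ici)
      inter_subset_left
  have hTK : sSup K ∈ K := hK.sSup_mem ⟨0, ⟨le_rfl, hs⟩, h0⟩
  set T := sSup K
  have hT0 : 0 ≤ T := hTK.1.1
  have hTs : T < s := hTK.1.2.lt_of_ne fun h => hxs.not_ge (h ▸ hTK.2)
  have hlt : ∀ t ∈ Ioc T s, x t < p := fun t ht => by
    by_contra! hge
    exact ht.1.not_ge (le_csSup hK.bddAbove ⟨⟨hT0.trans ht.1.le, ht.2⟩, hge⟩)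
  obtain ⟨u, hTu, hu⟩ : ∃ u, T < u ∧ Ico T u ⊆ {t | a < x t ∧ t < s} :=
    exists_Ico_subset_of_mem_nhds
      (((hx T hT0).continuousAt.eventually (lt_mem_nhds (hap.trans_le hTK.2))).and
        (Iio_mem_nhds hTs)) ⟨s, hTs⟩
  obtain ⟨s', hs'⟩ : ∃ s', s' ∈ Ioo T u := exists_between hTu
  have hmono : MonotoneOn x (Icc T s') := by
    refine monotoneOn_of_deriv_nonneg (convex_Icc T s')
      (hcont.mono (Icc_subset_Icc hT0 (hu ⟨hs'.1.le, hs'.2⟩).2.le)) ?_ ?_ <;>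
      rw [interior_Icc] <;> intro t ht
    · exact (hx t (hT0.trans ht.1.le)).differentiableAt.differentiableWithinAt
    · have htu : t ∈ Ico T u := ⟨ht.1.le, ht.2.trans hs'.2⟩
      rw [(hx t (hT0.trans ht.1.le)).deriv]
      exact hbelow t (hT0.trans ht.1.le) ⟨(hu htu).1, hlt t ⟨ht.1, (hu htu).2.le⟩⟩
  have hxT : p ≤ x T := hTK.2
  have hxs' : x s' < p := hlt s' ⟨hs'.1, (hu ⟨hs'.1.le, hs'.2⟩).2.le⟩
  linarith [hmono ⟨le_rfl, hs'.1.le⟩ ⟨hs'.1.le, le_rfl⟩ hs'.1.le]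

lemma eq_zero_of_tendsto_of_tendsto_deriv {x x' : ℝ → ℝ} {L l : ℝ}
    (hx : ∀ᶠ t in atTop, HasDerivAt x (x' t) t) (hxL : Tendsto x atTop (𝓝 L))
    (hx' : Tendsto x' atTop (𝓝 l)) : l = 0 := by
  obtain ⟨T, hT⟩ := eventually_atTop.1 hx
  have hmvt : ∀ t, ∃ c, t < c ∧ (T ≤ t → x' c = x (t + 1) - x t) := fun t => by
    by_cases ht : T ≤ t
    · obtain ⟨c, hc, hc'⟩ := exists_hasDerivAt_eq_slope x x' (lt_add_one t)
        (fun c hc => (hT c (ht.trans hc.1)).continuousAt.continuousWithinAt)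
        (fun c hc => hT c (ht.trans hc.1.le))
      exact ⟨c, hc.1, fun _ => by simpa using hc'⟩
    · exact ⟨t + 1, lt_add_one t, fun h => absurd h ht⟩
  choose ξ hξ hξx using hmvt
  have hlim : Tendsto (fun t => x (t + 1) - x t) atTop (𝓝 (L - L)) :=
    (hxL.comp (tendsto_atTop_add_const_right _ 1 tendsto_id)).sub hxL
  have hlim' : Tendsto (fun t => x' (ξ t)) atTop (𝓝 l) :=
    hx'.comp (tendsto_atTop_mono (fun t => (hξ t).le) tendsto_id)
  rw [sub_self] at hlim
  exact tendsto_nhds_unique (hlim'.congr' ((eventually_ge_atTop T).mono fun t ht => hξx t ht)) hlim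

lemma eq_zero_of_tendsto_of_hasDerivAt_comp {g x : ℝ → ℝ} {L : ℝ} (hg : ContinuousAt g L)
    (hx : ∀ᶠ t in atTop, HasDerivAt x (g (x t)) t) (hxL : Tendsto x atTop (𝓝 L)) : g L = 0 :=
  eq_zero_of_tendsto_of_tendsto_deriv hx hxL (hg.tendsto.comp hxL)

lemma exists_tendsto_of_antitoneOn_Ici {f : ℝ → ℝ} {t₀ m : ℝ} (hf : AntitoneOn f (Ici t₀))
    (hm : ∀ t, t₀ ≤ t → m ≤ f t) : ∃ L, Tendsto f atTop (𝓝 L) := by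
  have hanti : Antitone fun t => f (max t t₀) := fun u v huv =>
    hf (le_max_right u t₀) (le_max_right v t₀) (max_le_max_right t₀ huv)
  refine ⟨_, (tendsto_atTop_ciInf hanti ⟨m, ?_⟩).congr' ?_⟩
  · rintro _ ⟨t, rfl⟩
    exact hm _ (le_max_right t t₀)
  · filter_upwards [eventually_ge_atTop t₀] with t ht
    rw [max_eq_left ht]

lemma tendsto_of_hasDerivAt_of_mem_Ico {g x : ℝ → ℝ} {a b p : ℝ} (hg : Continuous g)
    (hap : a < p) (hpos : ∀ y ∈ Ioo a p, 0 < g y) (hneg : ∀ y ∈ Ioo p b, g y < 0)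
    (hx₀ : x 0 ∈ Ico p b) (hode : ∀ t, 0 ≤ t → HasDerivAt x (g (x t)) t) :
    Tendsto x atTop (𝓝 p) := by
  have hpb : p < b := hx₀.1.trans_lt hx₀.2
  have hgp : g p ≤ 0 :=
    le_of_tendsto (hg.continuousWithinAt (s := Ioi p))
      (mem_of_superset (Ioo_mem_nhdsGT hpb) fun y hy => (hneg y hy).le)
  have hge : ∀ t, 0 ≤ t → p ≤ x t :=
    le_of_hasDerivAt_of_nonneg_below hap hode hx₀.1 fun t _ hxt => (hpos _ hxt).le
  have hle : ∀ t, 0 ≤ t → x t ≤ x 0 := fun t ht => neg_le_neg_iff.1 <|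
    le_of_hasDerivAt_of_nonneg_below (x := -x) (neg_lt_neg hx₀.2) (fun t ht => (hode t ht).neg)
      le_rfl (fun t _ hxt => by
        simp only [Pi.neg_apply, mem_Ioo, neg_lt_neg_iff] at hxt
        exact neg_nonneg.2 (hneg _ ⟨hx₀.1.trans_lt hxt.2, hxt.1⟩).le) t ht
  have hmem : ∀ t, 0 ≤ t → x t ∈ Icc p (x 0) := fun t ht => ⟨hge t ht, hle t ht⟩
  have hgx : ∀ t, 0 ≤ t → g (x t) ≤ 0 := fun t ht => by
    rcases (hge t ht).eq_or_lt with h | h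
    · rwa [← h]
    · exact (hneg _ ⟨h, (hle t ht).trans_lt hx₀.2⟩).le
  have hanti : AntitoneOn x (Ici 0) := by
    refine antitoneOn_of_deriv_nonpos (convex_Ici 0)
      (fun t ht => (hode t ht).continuousAt.continuousWithinAt) ?_ ?_ <;>
      rw [interior_Ici] <;> intro t ht
    · exact (hode t ht.le).differentiableAt.differentiableWithinAt
    · rw [(hode t ht.le).deriv]
      exact hgx t ht.le
  obtain ⟨L, hL⟩ := exists_tendsto_of_antitoneOn_Ici hanti hge
  have hL_mem : L ∈ Icc p (x 0) :=
    isClosed_Icc.mem_of_tendsto hL ((eventually_ge_atTop 0).mono hmem)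
  have hgL : g L = 0 :=
    eq_zero_of_tendsto_of_hasDerivAt_comp hg.continuousAt
      ((eventually_ge_atTop 0).mono hode) hL
  obtain rfl : p = L := hL_mem.1.eq_or_lt.resolve_right fun h =>
    (hneg L ⟨h, hL_mem.2.trans_lt hx₀.2⟩).ne hgL
  exact hL

lemma tendsto_of_hasDerivAt_of_mem_Ioo {g x : ℝ → ℝ} {a b p : ℝ} (hg : Continuous g)
    (hap : a < p) (hpb : p < b) (hpos : ∀ y ∈ Ioo a p, 0 < g y)
    (hneg : ∀ y ∈ Ioo p b, g y < 0) (hx₀ : x 0 ∈ Ioo a b)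
    (hode : ∀ t, 0 ≤ t → HasDerivAt x (g (x t)) t) : Tendsto x atTop (𝓝 p) := by
  rcases le_or_gt p (x 0) with hpx | hxp
  · exact tendsto_of_hasDerivAt_of_mem_Ico hg hap hpos hneg ⟨hpx, hx₀.2⟩ hode
  · have hlim : Tendsto (-x) atTop (𝓝 (-p)) :=
      tendsto_of_hasDerivAt_of_mem_Ico (g := fun y => -g (-y)) (b := -a)
        (hg.comp continuous_neg).neg (neg_lt_neg hpb)
        (fun y hy => neg_pos.2 (hneg _ ⟨lt_neg.1 hy.2, neg_lt.1 hy.1⟩))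
        (fun y hy => neg_neg_iff_pos.2 (hpos _ ⟨lt_neg.1 hy.2, neg_lt.1 hy.1⟩))
        ⟨neg_le_neg hxp.le, neg_lt_neg hx₀.1⟩
        (fun t ht => by simpa using (hode t ht).neg)
    simpa using hlim.neg

theorem gradient_flow_converges_general
    (F : ℝ → ℝ) (hF : ContDiff ℝ 1 F) (a b p : ℝ) (hap : a < p) (hpb : p < b)
    (hneg : ∀ y ∈ Set.Ioo a p, deriv F y < 0)
    (hpos : ∀ y ∈ Set.Ioo p b, 0 < deriv F y)
    (x₀ : ℝ) (hx₀ : x₀ ∈ Set.Ioo a b)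
    (x : ℝ → ℝ) (hx0 : x 0 = x₀)
    (hode : ∀ t : ℝ, 0 ≤ t → HasDerivAt x (-(deriv F (x t))) t) :
    Filter.Tendsto x Filter.atTop (nhds p) :=
  tendsto_of_hasDerivAt_of_mem_Ioo (hF.continuous_deriv le_rfl).neg hap hpb
    (fun y hy => neg_pos.2 (hneg y hy)) (fun y hy => neg_neg_iff_pos.2 (hpos y hy))
    (hx0 ▸ hx₀) hode

theorem gradient_flow_converges
    (F : ℝ → ℝ) (hF : ContDiff ℝ 1 F) (a b p : ℝ) (hap : a < p) (hpb : p < b)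
    (hp : deriv F p = 0)
    (hstrict : ∀ᶠ y in nhdsWithin p {p}ᶜ, F p < F y)
    (hneg : ∀ y ∈ Set.Ioo a p, deriv F y < 0)
    (hpos : ∀ y ∈ Set.Ioo p b, 0 < deriv F y)
    (x₀ : ℝ) (hx₀ : x₀ ∈ Set.Ioo a b)
    (x : ℝ → ℝ) (hx0 : x 0 = x₀)
    (hode : ∀ t : ℝ, 0 ≤ t → HasDerivAt x (-(deriv F (x t))) t) :
    Filter.Tendsto x Filter.atTop (nhds p) :=
  gradient_flow_converges_general F hF a b p hap hpb hneg hpos x₀ hx₀ x hx0 hode
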